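/- (Theorem 1(ii): optimality of the risk-sensitive separation controller.) Let Γ, R, F, M be as in the risk-sensitive setting and let W satisfy the risk-sensitive dynamic programming equation (W(ω̂,M) = ⟨ω̂,F⟩; W(ω̂,k) = inf_{u∈U} ∑_{y∈Y} W(Λ_{Γ,R}(u,y)ω̂, k+1) p_R(y|u,ω̂) for 0 ≤ k ≤ M−1). Suppose moreover that for every positive semidefinite ω̂ and every 0 ≤ k ≤ M−1 there is a control û*(ω̂,k) ∈ U attaining the infimum. Fix a positive semidefinite initial matrix ω̂₀ and define the separation controller K̂* by u_k = û*(ω̂_k,k), where ω̂_{k+1} = Λ_{Γ,R}(u_k, y_{k+1}) ω̂_k. Then J^μ_{ω̂₀,0}(K̂*) = W(ω̂₀,0), and consequently J^μ_{ω̂₀,0}(K̂*) ≤ J^μ_{ω̂₀,0}(K) for every feedback controller K. -/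

import Mathlib

/-!
Since `Γ(u,y)` is linear and `R(u)` homogeneous, the unnormalized state `Γ_R(u,y)ωh` is
`p_R(y|u,ωh) • Λ_{Γ,R}(u,y)ωh`, so the cost still to be paid with `m + 1` outcomes left is the
`p_R`-weighted sum, over the next outcome, of the costs with `m` outcomes left from the states
`Λ_{Γ,R}(u,y)ωh`. Backward induction on the number of outcomes left then shows that `W(ωh,k)`
bounds the cost of every controller from below (take the infimum of the dynamic programming
equation at `u = K(record)`), with equality for the separation controller, which attains that
infimum at every state it visits.
-/

open Matrix BigOperators
open scoped ComplexOrder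

noncomputable section

/-- Complex `n × n` matrices. -/
abbrev Mat (n : ℕ) := Matrix (Fin n) (Fin n) ℂ

/-- Real part of the trace. -/
def trR {n : ℕ} (A : Mat n) : ℝ := A.trace.re

/-- `p_R(y|u,ωh) = tr(Γ(u,y)(R(u)ωh)) / tr(R(u)ωh)` (equal to `0` when the
denominator vanishes, by the junk-value convention of real division). -/
def pR {n : ℕ} {U Y : Type*} (Γ : U → Y → Mat n →ₗ[ℂ] Mat n)
    (R : U → Mat n → Mat n) (u : U) (y : Y) (ωh : Mat n) : ℝ :=
  trR (Γ u y (R u ωh)) / trR (R u ωh)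

/-- The unnormalized conditional state
`Λ_{Γ,R}(u,y)ωh = Γ_R(u,y)ωh / p_R(y|u,ωh)` (equal to `0` when `p_R(y|u,ωh) = 0`). -/
def lamR {n : ℕ} {U Y : Type*} (Γ : U → Y → Mat n →ₗ[ℂ] Mat n)
    (R : U → Mat n → Mat n) (u : U) (y : Y) (ωh : Mat n) : Mat n :=
  (pR Γ R u y ωh)⁻¹ • Γ u y (R u ωh)

/-- The cost functional `G`: `G(ωh) = tr(F ωh)` when no outcomes remain, and otherwise
`G_j(ωh) = G_{j+1}(Γ(u_j,y_{j+1}) R(u_j) ωh)`, with controls `u_j = K(record so far)`. -/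
def Gcost {n : ℕ} {U Y : Type*} (Γ : U → Y → Mat n →ₗ[ℂ] Mat n)
    (R : U → Mat n → Mat n) (F : Mat n) (K : List Y → U) :
    List Y → Mat n → List Y → ℝ
  | _, ωh, [] => trR (F * ωh)
  | rec, ωh, y :: ys =>
      Gcost Γ R F K (rec ++ [y]) (Γ (K rec) y (R (K rec) ωh)) ys

/-- `∏_k p_R(y_{k+1}|u_k, ωh_k)` along the record `ys`, with the unnormalized
conditional dynamics `ωh_{k+1} = Λ_{Γ,R}(u_k,y_{k+1}) ωh_k`. -/
def prodPR {n : ℕ} {U Y : Type*} (Γ : U → Y → Mat n →ₗ[ℂ] Mat n)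
    (R : U → Mat n → Mat n) (K : List Y → U) : Mat n → List Y → List Y → ℝ
  | _, _, [] => 1
  | ωh, rec, y :: ys =>
      pR Γ R (K rec) y ωh * prodPR Γ R K (lamR Γ R (K rec) y ωh) (rec ++ [y]) ys

/-- The terminal state of the unnormalized conditional dynamics
`ωh_{k+1} = Λ_{Γ,R}(u_k,y_{k+1}) ωh_k` along the record `ys`. -/
def trajR {n : ℕ} {U Y : Type*} (Γ : U → Y → Mat n →ₗ[ℂ] Mat n)
    (R : U → Mat n → Mat n) (K : List Y → U) : Mat n → List Y → List Y → Mat n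
  | ωh, _, [] => ωh
  | ωh, rec, y :: ys => trajR Γ R K (lamR Γ R (K rec) y ωh) (rec ++ [y]) ys

/-- The state trajectory of the risk-sensitive separation controller: starting from
`ωh` at time `k`, follow the outcomes `ys`, applying at each step the control
`ustar(current unnormalized state, time)`. -/
def sepEvolveR {n : ℕ} {U Y : Type*} (Γ : U → Y → Mat n →ₗ[ℂ] Mat n)
    (R : U → Mat n → Mat n) (ustar : Mat n → ℕ → U) : Mat n → ℕ → List Y → Mat n
  | ωh, _, [] => ωh
  | ωh, k, y :: ys =>
      sepEvolveR Γ R ustar (lamR Γ R (ustar ωh k) y ωh) (k + 1) ys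

/-- The risk-sensitive separation controller `K̂*` determined by `ustar` and the initial
state `ωh₀`. -/
def sepControllerR {n : ℕ} {U Y : Type*} (Γ : U → Y → Mat n →ₗ[ℂ] Mat n)
    (R : U → Mat n → Mat n) (ustar : Mat n → ℕ → U) (ωh₀ : Mat n)
    (rec : List Y) : U :=
  ustar (sepEvolveR Γ R ustar ωh₀ 0 rec) rec.length

section Matrices

variable {n : ℕ}

lemma trR_smul (r : ℝ) (A : Mat n) : trR (r • A) = r * trR A := by
  simp [trR, Matrix.trace_smul, Complex.real_smul]

lemma Matrix.PosSemidef.trR_nonneg {A : Mat n} (hA : A.PosSemidef) : 0 ≤ trR A :=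
  (Complex.nonneg_iff.mp hA.trace_nonneg).1

lemma Matrix.PosSemidef.eq_zero_of_trR_eq_zero {A : Mat n} (hA : A.PosSemidef)
    (h : trR A = 0) : A = 0 := by
  refine hA.trace_eq_zero_iff.mp (Complex.ext h ?_)
  exact (Complex.nonneg_iff.mp hA.trace_nonneg).2.symm

end Matrices

section Model

variable {n : ℕ} {U Y : Type*} {Γ : U → Y → Mat n →ₗ[ℂ] Mat n} {R : U → Mat n → Mat n}

lemma pR_nonneg {u : U} {y : Y} {ωh : Mat n} (hR : (R u ωh).PosSemidef)
    (hΓ : (Γ u y (R u ωh)).PosSemidef) : 0 ≤ pR Γ R u y ωh :=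
  div_nonneg hΓ.trR_nonneg hR.trR_nonneg

lemma lamR_posSemidef {u : U} {y : Y} {ωh : Mat n} (hR : (R u ωh).PosSemidef)
    (hΓ : (Γ u y (R u ωh)).PosSemidef) : (lamR Γ R u y ωh).PosSemidef :=
  hΓ.smul (inv_nonneg.mpr (pR_nonneg hR hΓ))

/-- Dividing by `p_R` loses nothing: when `p_R = 0`, positivity forces `Γ_R(u,y)ωh = 0`. -/
lemma pR_smul_lamR {u : U} {y : Y} {ωh : Mat n} (hR : (R u ωh).PosSemidef)
    (hΓ : (Γ u y (R u ωh)).PosSemidef) :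
    pR Γ R u y ωh • lamR Γ R u y ωh = Γ u y (R u ωh) := by
  by_cases hp : pR Γ R u y ωh = 0
  · rw [hp, zero_smul, eq_comm]
    rcases div_eq_zero_iff.mp hp with hnum | hden
    · exact hΓ.eq_zero_of_trR_eq_zero hnum
    · rw [hR.eq_zero_of_trR_eq_zero hden, map_zero]
  · rw [lamR, smul_smul, mul_inv_cancel₀ hp, one_smul]

end Model

lemma Fintype.sum_fin_succ_pi {Y β : Type*} [Fintype Y] [AddCommMonoid β] {m : ℕ}
    (g : (Fin (m + 1) → Y) → β) :
    ∑ ys : Fin (m + 1) → Y, g ys = ∑ y : Y, ∑ ys : Fin m → Y, g (Fin.cons y ys) :=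
  ((Fin.consEquiv fun _ => Y).sum_comp g).symm.trans (Fintype.sum_prod_type _)

section Cost

variable {n : ℕ} {U Y : Type*} {Γ : U → Y → Mat n →ₗ[ℂ] Mat n} {R : U → Mat n → Mat n}
  {F : Mat n}

lemma Gcost_smul (hRhom : ∀ (u : U) (r : ℝ) (ωh : Mat n), R u (r • ωh) = r • R u ωh)
    (K : List Y → U) (r : ℝ) (ys rec : List Y) (ωh : Mat n) :
    Gcost Γ R F K rec (r • ωh) ys = r * Gcost Γ R F K rec ωh ys := by
  induction ys generalizing rec ωh with
  | nil => simp only [Gcost, Matrix.mul_smul, trR_smul]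
  | cons y ys ih => simp only [Gcost, hRhom, LinearMap.map_smul_of_tower, ih]

variable [Fintype Y]

variable (Γ R F) in
/-- The multiplicative cost `J^μ_{ωh,k}(K)`, where `rec` is the record up to time `k` (read by
`K`) and `m = M - k` outcomes are still to come. -/
def multCost (K : List Y → U) (rec : List Y) (ωh : Mat n) (m : ℕ) : ℝ :=
  ∑ ys : Fin m → Y, Gcost Γ R F K rec ωh (List.ofFn ys)

lemma multCost_zero (K : List Y → U) (rec : List Y) (ωh : Mat n) :
    multCost Γ R F K rec ωh 0 = trR (F * ωh) := by
  simp [multCost, Gcost]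

lemma multCost_succ
    (hPSD : ∀ (u : U) (y : Y) (ω : Mat n), ω.PosSemidef → (Γ u y ω).PosSemidef)
    (hRPSD : ∀ (u : U) (ωh : Mat n), ωh.PosSemidef → (R u ωh).PosSemidef)
    (hRhom : ∀ (u : U) (r : ℝ) (ωh : Mat n), R u (r • ωh) = r • R u ωh)
    (K : List Y → U) (rec : List Y) {ωh : Mat n} (hωh : ωh.PosSemidef) (m : ℕ) :
    multCost Γ R F K rec ωh (m + 1) = ∑ y : Y,
      multCost Γ R F K (rec ++ [y]) (lamR Γ R (K rec) y ωh) m * pR Γ R (K rec) y ωh := by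
  have hR := hRPSD (K rec) ωh hωh
  simp only [multCost, Fintype.sum_fin_succ_pi, List.ofFn_succ, Fin.cons_zero, Fin.cons_succ,
    Gcost, Finset.sum_mul]
  refine Finset.sum_congr rfl fun y _ => Finset.sum_congr rfl fun ys _ => ?_
  rw [← pR_smul_lamR hR (hPSD _ y _ hR), Gcost_smul hRhom, mul_comm]

end Cost

lemma sepEvolveR_append_singleton {n : ℕ} {U Y : Type*} {Γ : U → Y → Mat n →ₗ[ℂ] Mat n}
    {R : U → Mat n → Mat n} (ustar : Mat n → ℕ → U) (ωh : Mat n) (k : ℕ)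
    (rec : List Y) (y : Y) :
    sepEvolveR Γ R ustar ωh k (rec ++ [y]) =
      lamR Γ R (ustar (sepEvolveR Γ R ustar ωh k rec) (k + rec.length)) y
        (sepEvolveR Γ R ustar ωh k rec) := by
  induction rec generalizing ωh k with
  | nil => rfl
  | cons a rec ih =>
    simp only [List.cons_append, sepEvolveR, ih, List.length_cons, Nat.add_assoc, Nat.add_comm 1]

section DynamicProgramming

variable {n : ℕ} {U Y : Type*} [Fintype Y] {Γ : U → Y → Mat n →ₗ[ℂ] Mat n}
  {R : U → Mat n → Mat n} {F : Mat n} {M : ℕ} {W : Mat n → ℕ → ℝ}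

lemma le_multCost [Finite U]
    (hPSD : ∀ (u : U) (y : Y) (ω : Mat n), ω.PosSemidef → (Γ u y ω).PosSemidef)
    (hRPSD : ∀ (u : U) (ωh : Mat n), ωh.PosSemidef → (R u ωh).PosSemidef)
    (hRhom : ∀ (u : U) (r : ℝ) (ωh : Mat n), R u (r • ωh) = r • R u ωh)
    (hWM : ∀ ωh : Mat n, W ωh M = trR (F * ωh))
    (hWk : ∀ k < M, ∀ ωh : Mat n, ωh.PosSemidef →
      W ωh k = ⨅ u : U, ∑ y : Y, W (lamR Γ R u y ωh) (k + 1) * pR Γ R u y ωh)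
    (K : List Y → U) {m k : ℕ} (hkm : k + m = M) (rec : List Y) {ωh : Mat n}
    (hωh : ωh.PosSemidef) : W ωh k ≤ multCost Γ R F K rec ωh m := by
  induction m generalizing k rec ωh with
  | zero => rw [multCost_zero, ← hWM, ← hkm, Nat.add_zero]
  | succ m ih =>
    have hR := hRPSD (K rec) ωh hωh
    calc W ωh k
        = ⨅ u : U, ∑ y : Y, W (lamR Γ R u y ωh) (k + 1) * pR Γ R u y ωh :=
          hWk k (by omega) ωh hωh
      _ ≤ ∑ y : Y, W (lamR Γ R (K rec) y ωh) (k + 1) * pR Γ R (K rec) y ωh :=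
          ciInf_le (Finite.bddBelow_range _) (K rec)
      _ ≤ ∑ y : Y, multCost Γ R F K (rec ++ [y]) (lamR Γ R (K rec) y ωh) m
            * pR Γ R (K rec) y ωh := by
          gcongr with y _
          · exact pR_nonneg hR (hPSD _ y _ hR)
          · exact ih (by omega) _ (lamR_posSemidef hR (hPSD _ y _ hR))
      _ = multCost Γ R F K rec ωh (m + 1) := (multCost_succ hPSD hRPSD hRhom K rec hωh m).symm

lemma multCost_sepControllerR
    (hPSD : ∀ (u : U) (y : Y) (ω : Mat n), ω.PosSemidef → (Γ u y ω).PosSemidef)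
    (hRPSD : ∀ (u : U) (ωh : Mat n), ωh.PosSemidef → (R u ωh).PosSemidef)
    (hRhom : ∀ (u : U) (r : ℝ) (ωh : Mat n), R u (r • ωh) = r • R u ωh)
    (hWM : ∀ ωh : Mat n, W ωh M = trR (F * ωh))
    (ustar : Mat n → ℕ → U)
    (hustar : ∀ k < M, ∀ ωh : Mat n, ωh.PosSemidef →
      (∑ y : Y, W (lamR Γ R (ustar ωh k) y ωh) (k + 1) * pR Γ R (ustar ωh k) y ωh)
        = W ωh k)
    (ωh₀ : Mat n) {m : ℕ} (rec : List Y) (hm : rec.length + m = M)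
    (hωh : (sepEvolveR Γ R ustar ωh₀ 0 rec).PosSemidef) :
    multCost Γ R F (sepControllerR Γ R ustar ωh₀) rec (sepEvolveR Γ R ustar ωh₀ 0 rec) m =
      W (sepEvolveR Γ R ustar ωh₀ 0 rec) rec.length := by
  induction m generalizing rec with
  | zero => rw [multCost_zero, ← hWM, ← hm, Nat.add_zero]
  | succ m ih =>
    set ωh := sepEvolveR Γ R ustar ωh₀ 0 rec
    have hR := hRPSD (ustar ωh rec.length) ωh hωh
    have hnext (y : Y) : sepEvolveR Γ R ustar ωh₀ 0 (rec ++ [y]) =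
        lamR Γ R (ustar ωh rec.length) y ωh := by
      rw [sepEvolveR_append_singleton, Nat.zero_add]
    rw [multCost_succ hPSD hRPSD hRhom _ rec hωh, ← hustar _ (by omega) ωh hωh]
    refine Finset.sum_congr rfl fun y _ => ?_
    have hrest := ih (rec ++ [y])
      (by rw [List.length_append, List.length_singleton]; omega)
      (by rw [hnext]; exact lamR_posSemidef hR (hPSD _ y _ hR))
    rw [hnext, List.length_append, List.length_singleton] at hrest
    rw [sepControllerR, hrest]

end DynamicProgramming

theorem riskSensitive_separation_optimal_general
    {n : ℕ} {U Y : Type*} [Fintype U] [Fintype Y]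
    (Γ : U → Y → Mat n →ₗ[ℂ] Mat n)
    (hPSD : ∀ (u : U) (y : Y) (ω : Mat n), ω.PosSemidef → (Γ u y ω).PosSemidef)
    (R : U → Mat n → Mat n)
    (hRPSD : ∀ (u : U) (ωh : Mat n), ωh.PosSemidef → (R u ωh).PosSemidef)
    (hRhom : ∀ (u : U) (r : ℝ) (ωh : Mat n), R u (r • ωh) = r • R u ωh)
    (F : Mat n)
    (M : ℕ)
    (W : Mat n → ℕ → ℝ)
    (hWM : ∀ ωh : Mat n, W ωh M = trR (F * ωh))
    (hWk : ∀ k < M, ∀ ωh : Mat n, ωh.PosSemidef →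
      W ωh k = ⨅ u : U, ∑ y : Y, W (lamR Γ R u y ωh) (k + 1) * pR Γ R u y ωh)
    (ustar : Mat n → ℕ → U)
    (hustar : ∀ k < M, ∀ ωh : Mat n, ωh.PosSemidef →
      (∑ y : Y, W (lamR Γ R (ustar ωh k) y ωh) (k + 1) * pR Γ R (ustar ωh k) y ωh)
        = W ωh k)
    (ωh₀ : Mat n) (hωh₀ : ωh₀.PosSemidef) :
    (∑ ys : Fin M → Y,
        Gcost Γ R F (sepControllerR Γ R ustar ωh₀) [] ωh₀ (List.ofFn ys)) = W ωh₀ 0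
    ∧ ∀ K : List Y → U,
        (∑ ys : Fin M → Y,
            Gcost Γ R F (sepControllerR Γ R ustar ωh₀) [] ωh₀ (List.ofFn ys))
          ≤ ∑ ys : Fin M → Y, Gcost Γ R F K [] ωh₀ (List.ofFn ys) := by
  have hsep : multCost Γ R F (sepControllerR Γ R ustar ωh₀) [] ωh₀ M = W ωh₀ 0 :=
    multCost_sepControllerR hPSD hRPSD hRhom hWM ustar hustar ωh₀ [] (Nat.zero_add M) hωh₀
  exact ⟨hsep, fun K =>
    hsep.le.trans (le_multCost hPSD hRPSD hRhom hWM hWk K (Nat.zero_add M) [] hωh₀)⟩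

/-- Theorem 1(ii): optimality of the risk-sensitive separation
controller.  If `W` satisfies the dynamic programming equation and `ustar` attains the
infimum, then the separation controller achieves `J^μ_{ωh₀,0}(K̂*) = W(ωh₀,0)` and is
optimal. -/
theorem riskSensitive_separation_optimal
    {n : ℕ} {U Y : Type*} [Fintype U] [Nonempty U] [Fintype Y] [Nonempty Y]
    (Γ : U → Y → Mat n →ₗ[ℂ] Mat n)
    (hPSD : ∀ (u : U) (y : Y) (ω : Mat n), ω.PosSemidef → (Γ u y ω).PosSemidef)
    (hNorm : ∀ (u : U) (ω : Mat n), ∑ y : Y, (Γ u y ω).trace = ω.trace)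
    (R : U → Mat n → Mat n)
    (hRPSD : ∀ (u : U) (ωh : Mat n), ωh.PosSemidef → (R u ωh).PosSemidef)
    (hRhom : ∀ (u : U) (r : ℝ) (ωh : Mat n), R u (r • ωh) = r • R u ωh)
    (F : Mat n) (hF : F.IsHermitian)
    (M : ℕ) (hM : 1 ≤ M)
    (W : Mat n → ℕ → ℝ)
    (hWM : ∀ ωh : Mat n, W ωh M = trR (F * ωh))
    (hWk : ∀ k < M, ∀ ωh : Mat n, ωh.PosSemidef →
      W ωh k = ⨅ u : U, ∑ y : Y, W (lamR Γ R u y ωh) (k + 1) * pR Γ R u y ωh)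
    (ustar : Mat n → ℕ → U)
    (hustar : ∀ k < M, ∀ ωh : Mat n, ωh.PosSemidef →
      (∑ y : Y, W (lamR Γ R (ustar ωh k) y ωh) (k + 1) * pR Γ R (ustar ωh k) y ωh)
        = W ωh k)
    (ωh₀ : Mat n) (hωh₀ : ωh₀.PosSemidef) :
    (∑ ys : Fin M → Y,
        Gcost Γ R F (sepControllerR Γ R ustar ωh₀) [] ωh₀ (List.ofFn ys)) = W ωh₀ 0
    ∧ ∀ K : List Y → U,
        (∑ ys : Fin M → Y,
            Gcost Γ R F (sepControllerR Γ R ustar ωh₀) [] ωh₀ (List.ofFn ys))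
          ≤ ∑ ys : Fin M → Y, Gcost Γ R F K [] ωh₀ (List.ofFn ys) :=
  riskSensitive_separation_optimal_general Γ hPSD R hRPSD hRhom F M W hWM hWk ustar hustar ωh₀ hωh₀
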